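/- For every integer i ≥ 2 and all distinct integers a, b with |a| ≤ i and |b| ≤ i, the Euclidean inner product of the layer-norm hashes satisfies φ(a, 1) · φ(b, 1) ≤ 1 − 1/(2i⁴). -/

import Mathlib

open scoped RealInnerProductSpace

/-- Layer norm: subtract the mean, then normalize to unit Euclidean norm. -/
noncomputable def layerNorm {ι : Type*} [Fintype ι] (v : EuclideanSpace ℝ ι) :
    EuclideanSpace ℝ ι :=
  let c : EuclideanSpace ℝ ι := WithLp.toLp 2 (fun j => v j - (∑ l, v l) / (Fintype.card ι))
  ‖c‖⁻¹ • c

/-- The layer-norm hash φ(x, y) = layer_norm(⟨x, y, −x, −y⟩) ∈ ℝ⁴. -/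
noncomputable def lnHash (x y : ℝ) : EuclideanSpace ℝ (Fin 4) :=
  layerNorm (WithLp.toLp 2 ![x, y, -x, -y] : EuclideanSpace ℝ (Fin 4))

/-!
`⟨x, y, -x, -y⟩` already has mean zero, so `φ(a, 1) · φ(b, 1)` is the cosine `c` of the angle
between `(a, 1)` and `(b, 1)` in `ℝ²`. By Lagrange's identity
`(a² + 1)(b² + 1) = (ab + 1)² + (a - b)²`, we get `1 - c² = (a - b)² / ((a² + 1)(b² + 1))`,
which is at least `1 / i⁴` for distinct integers of size at most `i`; and `√(1 - t) ≤ 1 - t / 2`.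
-/

theorem layerNorm_of_sum_eq_zero {ι : Type*} [Fintype ι] (v : EuclideanSpace ℝ ι)
    (hv : ∑ j, v j = 0) : layerNorm v = ‖v‖⁻¹ • v := by
  simp [layerNorm, hv]

theorem inner_lnHash (x y x' y' : ℝ) :
    ⟪lnHash x y, lnHash x' y'⟫ = (x * x' + y * y') / √((x ^ 2 + y ^ 2) * (x' ^ 2 + y' ^ 2)) := by
  have hsum (p q : ℝ) : ∑ j, (WithLp.toLp 2 ![p, q, -p, -q] : EuclideanSpace ℝ (Fin 4)) j = 0 := by
    simp [Fin.sum_univ_four]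
  have hnorm (p q : ℝ) :
      ‖(WithLp.toLp 2 ![p, q, -p, -q] : EuclideanSpace ℝ (Fin 4))‖ = √2 * √(p ^ 2 + q ^ 2) := by
    rw [EuclideanSpace.norm_eq, ← Real.sqrt_mul zero_le_two]
    congr 1
    simp [Fin.sum_univ_four]
    ring
  rw [lnHash, lnHash, layerNorm_of_sum_eq_zero _ (hsum x y), layerNorm_of_sum_eq_zero _ (hsum x' y'),
    real_inner_smul_left, real_inner_smul_right, hnorm, hnorm, PiLp.inner_apply,
    Real.sqrt_mul (by positivity)]
  simp only [mul_inv_rev, RCLike.inner_apply, Real.ringHom_apply, Fin.sum_univ_four,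
    Matrix.cons_val_zero, Matrix.cons_val_one, Matrix.cons_val, mul_neg, neg_mul, neg_neg]
  field_simp
  rw [Real.sq_sqrt zero_le_two]
  ring

theorem div_sqrt_le_one_sub_half {s P t : ℝ} (hP : 0 < P) (h : s ^ 2 ≤ (1 - t) * P) :
    s / √P ≤ 1 - t / 2 := by
  have ht : t ≤ 1 := by nlinarith [sq_nonneg s]
  rw [div_le_iff₀ (Real.sqrt_pos.mpr hP)]
  calc s ≤ |s| := le_abs_self s
    _ ≤ √((1 - t / 2) ^ 2 * P) := Real.abs_le_sqrt (by nlinarith [sq_nonneg t])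
    _ = (1 - t / 2) * √P := by rw [Real.sqrt_mul (sq_nonneg _), Real.sqrt_sq (by linarith)]

theorem sq_add_one_mul_succ_sq_add_one_le {i a : ℤ} (hi : 2 ≤ i) (ha : -i ≤ a) (ha' : a + 1 ≤ i) :
    (a ^ 2 + 1) * ((a + 1) ^ 2 + 1) ≤ i ^ 4 := by
  have hm : 0 ≤ a * (a + 1) := by
    rcases le_or_gt 0 a with h | h <;> nlinarith
  have hM : a * (a + 1) ≤ i ^ 2 - 2 := by nlinarith
  calc (a ^ 2 + 1) * ((a + 1) ^ 2 + 1) = (a * (a + 1) + 1) ^ 2 + 1 := by ring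
    _ ≤ (i ^ 2 - 1) ^ 2 + 1 := by gcongr; linarith
    _ ≤ i ^ 4 := by nlinarith

theorem sq_add_one_mul_sq_add_one_le {i a b : ℤ} (hi : 2 ≤ i) (hab : a ≠ b) (ha : |a| ≤ i)
    (hb : |b| ≤ i) : (a ^ 2 + 1) * (b ^ 2 + 1) ≤ i ^ 4 * (a - b) ^ 2 := by
  wlog hlt : a < b generalizing a b
  · have := this hab.symm hb ha (lt_of_le_of_ne (not_lt.mp hlt) hab.symm)
    linarith [show (b - a) ^ 2 = (a - b) ^ 2 by ring]
  obtain ⟨ha₁, ha₂⟩ := abs_le.mp ha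
  obtain ⟨hb₁, hb₂⟩ := abs_le.mp hb
  rcases eq_or_lt_of_le (show a + 1 ≤ b from hlt) with rfl | hfar
  · simpa using sq_add_one_mul_succ_sq_add_one_le hi ha₁ hb₂
  · have hprod : (a ^ 2 + 1) * (b ^ 2 + 1) ≤ (i ^ 2 + 1) * (i ^ 2 + 1) := by
      gcongr (?_ + 1) * (?_ + 1)
      exacts [sq_le_sq' ha₁ ha₂, sq_le_sq' hb₁ hb₂]
    have hdist : 4 ≤ (a - b) ^ 2 := by nlinarith
    have hi2 : 4 ≤ i ^ 2 := by nlinarith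
    calc (a ^ 2 + 1) * (b ^ 2 + 1) ≤ (i ^ 2 + 1) * (i ^ 2 + 1) := hprod
      _ ≤ i ^ 4 * 4 := by nlinarith
      _ ≤ i ^ 4 * (a - b) ^ 2 := by gcongr

/-- For integers a ≠ b with |a|, |b| ≤ i and i ≥ 2, φ(a,1) · φ(b,1) ≤ 1 − 1/(2i⁴). -/
theorem lnHash_distinct_inner_bound (i a b : ℤ) (hi : 2 ≤ i) (hab : a ≠ b)
    (ha : |a| ≤ i) (hb : |b| ≤ i) :
    ⟪lnHash (a : ℝ) 1, lnHash (b : ℝ) 1⟫ ≤ 1 - 1 / (2 * (i : ℝ) ^ 4) := by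
  have hi4 : 0 < (i : ℝ) ^ 4 := by positivity
  have hsep : ((a : ℝ) ^ 2 + 1) * ((b : ℝ) ^ 2 + 1) ≤ (i : ℝ) ^ 4 * ((a : ℝ) - b) ^ 2 := by
    exact_mod_cast sq_add_one_mul_sq_add_one_le hi hab ha hb
  have ht : 1 / (i : ℝ) ^ 4 * (((a : ℝ) ^ 2 + 1) * ((b : ℝ) ^ 2 + 1)) ≤ ((a : ℝ) - b) ^ 2 := by
    rw [one_div_mul_eq_div, div_le_iff₀ hi4]
    linarith
  rw [inner_lnHash, one_pow, mul_one, show 1 / (2 * (i : ℝ) ^ 4) = 1 / (i : ℝ) ^ 4 / 2 by ring]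
  exact div_sqrt_le_one_sub_half (by positivity) (by linear_combination ht)
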